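/- arXiv:1601.06135 — 2 statements merged into one kernel-verified Lean document; each statement's English description precedes it below -/
import Mathlib

section
/- Let n be a positive integer, let 1 ≤ p ≤ ∞ and 1 ≤ q ≤ ∞ with p ≤ q' (q' the conjugate exponent of q), and define r by 1/r = 1/p − 1/q'. Let f ∈ L^p(ℝⁿ), let F be its Bargmann transform restricted to ℝⁿ, and let g(u) = (4/π)^{n/4}·e^{−‖u‖²/2}. Then ‖π^{−n/2}·F(z)·e^{−‖z‖²/2}‖_{L^r(ℝⁿ, dz)} ≤ (1/(2^{n/(2r)}·π^{n/2}))·‖f‖_{L^p(ℝⁿ)}·‖g‖_{L^q(ℝⁿ)}. -/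
open MeasureTheory ENNReal

/-- The Bargmann kernel on `ℝⁿ × ℝⁿ`. -/
noncomputable def bargmannKernel (n : ℕ) (z ζ : EuclideanSpace ℝ (Fin n)) : ℝ :=
  Real.pi ^ (-(n : ℝ) / 4) *
    Real.exp (-(‖z‖ ^ 2 + ‖ζ‖ ^ 2) / 2 + Real.sqrt 2 * (inner ℝ z ζ : ℝ))

/-- The Bargmann transform of `f`, restricted to real arguments. -/
noncomputable def bargmannTransform (n : ℕ) (f : EuclideanSpace ℝ (Fin n) → ℝ)
    (z : EuclideanSpace ℝ (Fin n)) : ℝ :=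
  ∫ ζ, f ζ * bargmannKernel n z ζ

/-!
Multiplying the Bargmann kernel by `e^{-‖z‖²/2}` completes a square:
`k(z, ζ) e^{-‖z‖²/2} = π^{-n/4} e^{-‖ζ - √2 z‖²/2}`. Hence the function on the left is dominated by
`π^{-n/2}` times the dilated convolution `z ↦ ∫ |f ζ| g(ζ - √2 z) dζ` with the Gaussian `g`
(using `π^{-n/4} ≤ (4/π)^{n/4}`). The exponents satisfy Young's relation `1/p + 1/q = 1 + 1/r`,
and Young's inequality for integral operators (Hölder with three factors, then Tonelli) bounds the
`L^r` norm of this convolution by `‖f‖_p ‖g‖_q` times `J^{1/r}`, where `J = 2^{-n/2}` is the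
Jacobian factor of the dilation `z ↦ √2 z` in the integrals of the kernel over `z`.
-/

open Module
open scoped NNReal

theorem ENNReal.ne_top_of_inv_add_inv_eq_one_add_inv {p q r : ℝ≥0∞} (hq : 1 ≤ q) (hr : r ≠ ∞)
    (hpqr : p⁻¹ + q⁻¹ = 1 + r⁻¹) : p ≠ ∞ := by
  rintro rfl
  rw [inv_top, zero_add] at hpqr
  exact (ENNReal.lt_add_right one_ne_top (ENNReal.inv_ne_zero.2 hr)).not_ge
    (hpqr ▸ ENNReal.inv_le_one.2 hq)

theorem ENNReal.inv_add_inv_eq_one_add_inv {p q q' r : ℝ≥0∞} (hq' : q⁻¹ + q'⁻¹ = 1)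
    (hpq' : p ≤ q') (hr : r⁻¹ = p⁻¹ - q'⁻¹) : p⁻¹ + q⁻¹ = 1 + r⁻¹ := by
  rw [← tsub_add_cancel_of_le (ENNReal.inv_le_inv.2 hpq'), ← hr, add_assoc, add_comm q'⁻¹, hq',
    add_comm]

theorem ENNReal.lintegral_mul_mul_rpow_le {α : Type*} [MeasurableSpace α] {μ : Measure α}
    {f g h : α → ℝ≥0∞} (hf : AEMeasurable f μ) (hg : AEMeasurable g μ) (hh : AEMeasurable h μ)
    {a b c : ℝ} (ha : 0 ≤ a) (hb : 0 ≤ b) (hc : 0 ≤ c) (habc : a + b + c = 1) :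
    ∫⁻ x, f x ^ a * g x ^ b * h x ^ c ∂μ ≤
      (∫⁻ x, f x ∂μ) ^ a * (∫⁻ x, g x ∂μ) ^ b * (∫⁻ x, h x ∂μ) ^ c := by
  have key := ENNReal.lintegral_prod_norm_pow_le (μ := μ) Finset.univ
    (f := ![f, g, h]) (p := ![a, b, c]) (by simp [Fin.forall_fin_succ, hf, hg, hh])
    (by simpa [Fin.sum_univ_three] using habc) (by simp [Fin.forall_fin_succ, ha, hb, hc])
  simpa [Fin.prod_univ_three, mul_assoc] using key

theorem ENNReal.rpow_mul_rpow_inv_sub (x : ℝ≥0∞) {p s : ℝ} (hp : 0 < p) (hs : 0 ≤ s)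
    (hsp : s ≤ p⁻¹) : (x ^ p) ^ s * (x ^ p) ^ (p⁻¹ - s) = x := by
  rw [← ENNReal.rpow_add_of_nonneg _ _ hs (sub_nonneg.2 hsp), add_sub_cancel, ← ENNReal.rpow_mul,
    mul_inv_cancel₀ hp.ne', ENNReal.rpow_one]

theorem ENNReal.rpow_inv_mul_rpow (x y : ℝ≥0∞) {r : ℝ} (hr : 0 < r) :
    (x ^ r⁻¹ * y) ^ r = x * y ^ r := by
  rw [ENNReal.mul_rpow_of_nonneg _ _ hr.le, ← ENNReal.rpow_mul, inv_mul_cancel₀ hr.ne',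
    ENNReal.rpow_one]

theorem ENNReal.lintegral_mul_le_lintegral_rpow_mul_rpow {α : Type*} [MeasurableSpace α]
    {μ : Measure α} {φ k : α → ℝ≥0∞} (hφ : AEMeasurable φ μ) (hk : AEMeasurable k μ)
    {p q r : ℝ} (hp : 1 ≤ p) (hq : 1 ≤ q) (hr : 0 < r) (hpqr : p⁻¹ + q⁻¹ = 1 + r⁻¹) :
    ∫⁻ x, φ x * k x ∂μ ≤ (∫⁻ x, φ x ^ p * k x ^ q ∂μ) ^ r⁻¹ *
      (∫⁻ x, φ x ^ p ∂μ) ^ (p⁻¹ - r⁻¹) * (∫⁻ x, k x ^ q ∂μ) ^ (q⁻¹ - r⁻¹) := by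
  have hrq : r⁻¹ ≤ q⁻¹ := by linarith [inv_le_one_of_one_le₀ hp]
  have hrp : r⁻¹ ≤ p⁻¹ := by linarith [inv_le_one_of_one_le₀ hq]
  have hr0 : 0 ≤ r⁻¹ := inv_nonneg.2 hr.le
  calc ∫⁻ x, φ x * k x ∂μ
      = ∫⁻ x, (φ x ^ p * k x ^ q) ^ r⁻¹ * (φ x ^ p) ^ (p⁻¹ - r⁻¹) * (k x ^ q) ^ (q⁻¹ - r⁻¹) ∂μ := by
        congr with x
        rw [ENNReal.mul_rpow_of_nonneg _ _ hr0, mul_right_comm _ ((k x ^ q) ^ r⁻¹),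
          ENNReal.rpow_mul_rpow_inv_sub _ (by linarith) hr0 hrp, mul_assoc,
          ENNReal.rpow_mul_rpow_inv_sub _ (by linarith) hr0 hrq]
    _ ≤ _ := ENNReal.lintegral_mul_mul_rpow_le ((hφ.pow_const p).mul (hk.pow_const q))
        (hφ.pow_const p) (hk.pow_const q) hr0 (sub_nonneg.2 hrp) (sub_nonneg.2 hrq)
        (by linarith)

theorem lintegral_rpow_lintegral_mul_le {α β : Type*} [MeasurableSpace α] [MeasurableSpace β]
    {μ : Measure α} {ν : Measure β} [SFinite μ] [SFinite ν]
    {φ : α → ℝ≥0∞} (hφ : AEMeasurable φ μ) {K : β → α → ℝ≥0∞}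
    (hK : Measurable (Function.uncurry K)) {p q r : ℝ} (hp : 1 ≤ p) (hq : 1 ≤ q) (hr : 0 < r)
    (hpqr : p⁻¹ + q⁻¹ = 1 + r⁻¹) {A B : ℝ≥0∞}
    (hA : ∀ z, ∫⁻ ζ, K z ζ ^ q ∂μ ≤ A) (hB : ∀ ζ, ∫⁻ z, K z ζ ^ q ∂ν ≤ B) :
    (∫⁻ z, (∫⁻ ζ, φ ζ * K z ζ ∂μ) ^ r ∂ν) ^ r⁻¹ ≤
      A ^ (q⁻¹ - r⁻¹) * B ^ r⁻¹ * (∫⁻ ζ, φ ζ ^ p ∂μ) ^ p⁻¹ := by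
  have hrq : r⁻¹ ≤ q⁻¹ := by linarith [inv_le_one_of_one_le₀ hp]
  have hrp : r⁻¹ ≤ p⁻¹ := by linarith [inv_le_one_of_one_le₀ hq]
  have hr0 : 0 ≤ r⁻¹ := inv_nonneg.2 hr.le
  set S := ∫⁻ ζ, φ ζ ^ p ∂μ
  set C := S ^ (p⁻¹ - r⁻¹) * A ^ (q⁻¹ - r⁻¹)
  have hrow (z : β) :
      (∫⁻ ζ, φ ζ * K z ζ ∂μ) ^ r ≤ (∫⁻ ζ, φ ζ ^ p * K z ζ ^ q ∂μ) * C ^ r := by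
    rw [← ENNReal.rpow_inv_mul_rpow _ _ hr]
    gcongr
    refine (ENNReal.lintegral_mul_le_lintegral_rpow_mul_rpow hφ
      hK.of_uncurry_left.aemeasurable hp hq hr hpqr).trans ?_
    rw [mul_assoc]
    dsimp only [C]
    gcongr
    exact hA z
  have hjoint : AEMeasurable (Function.uncurry fun z ζ => φ ζ ^ p * K z ζ ^ q) (ν.prod μ) :=
    (hφ.comp_snd.pow_const p).mul (hK.pow_const q).aemeasurable
  have htonelli : ∫⁻ z, ∫⁻ ζ, φ ζ ^ p * K z ζ ^ q ∂μ ∂ν ≤ S * B := calc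
    ∫⁻ z, ∫⁻ ζ, φ ζ ^ p * K z ζ ^ q ∂μ ∂ν = ∫⁻ ζ, φ ζ ^ p * ∫⁻ z, K z ζ ^ q ∂ν ∂μ := by
      rw [lintegral_lintegral_swap hjoint]
      congr with ζ
      exact lintegral_const_mul _ (hK.of_uncurry_right.pow_const q)
    _ ≤ ∫⁻ ζ, φ ζ ^ p * B ∂μ := lintegral_mono fun ζ => mul_le_mul_right (hB ζ) _
    _ = S * B := lintegral_mul_const'' _ (hφ.pow_const p)
  calc (∫⁻ z, (∫⁻ ζ, φ ζ * K z ζ ∂μ) ^ r ∂ν) ^ r⁻¹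
      ≤ (∫⁻ z, (∫⁻ ζ, φ ζ ^ p * K z ζ ^ q ∂μ) * C ^ r ∂ν) ^ r⁻¹ :=
        ENNReal.rpow_le_rpow (lintegral_mono hrow) hr0
    _ ≤ (S * B * C ^ r) ^ r⁻¹ := by
        rw [lintegral_mul_const'' (C ^ r) (f := fun z => ∫⁻ ζ, φ ζ ^ p * K z ζ ^ q ∂μ)
          hjoint.lintegral_prod_right']
        gcongr
    _ = A ^ (q⁻¹ - r⁻¹) * B ^ r⁻¹ * (S ^ r⁻¹ * S ^ (p⁻¹ - r⁻¹)) := by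
        rw [ENNReal.mul_rpow_of_nonneg _ _ hr0, ENNReal.mul_rpow_of_nonneg _ _ hr0,
          ← ENNReal.rpow_mul, mul_inv_cancel₀ hr.ne', ENNReal.rpow_one]
        ring
    _ = A ^ (q⁻¹ - r⁻¹) * B ^ r⁻¹ * S ^ p⁻¹ := by
        rw [← ENNReal.rpow_add_of_nonneg _ _ hr0 (sub_nonneg.2 hrp), add_sub_cancel]

theorem eLpNorm_top_lintegral_enorm_mul_comp_sub_le {E F G Z : Type*} [AddGroup E]
    [MeasurableSpace E] [MeasurableAdd E] [MeasurableSub E] {μ : Measure E}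
    [μ.IsAddRightInvariant] [NormedAddCommGroup F] [NormedAddCommGroup G] [MeasurableSpace Z]
    {ν : Measure Z} {f : E → F} {g : E → G} (hf : AEStronglyMeasurable f μ)
    (hg : StronglyMeasurable g) (w : Z → E) {p q : ℝ≥0∞} [p.HolderConjugate q] :
    eLpNorm (fun z => ∫⁻ ζ, ‖f ζ‖ₑ * ‖g (ζ - w z)‖ₑ ∂μ) ∞ ν ≤ eLpNorm f p μ * eLpNorm g q μ := by
  rw [eLpNorm_exponent_top]
  refine essSup_le_of_ae_le _ (.of_forall fun z => ?_)
  calc ‖∫⁻ ζ, ‖f ζ‖ₑ * ‖g (ζ - w z)‖ₑ ∂μ‖ₑ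
      = eLpNorm (fun ζ => ‖f ζ‖ * ‖g (ζ - w z)‖) 1 μ := by
        simp [eLpNorm_one_eq_lintegral_enorm, enorm_mul]
    _ ≤ (1 : ℝ≥0) * eLpNorm f p μ * eLpNorm (g ∘ (· - w z)) q μ :=
        eLpNorm_le_eLpNorm_mul_eLpNorm_of_nnnorm hf
          (hg.comp_measurable (measurable_sub_const _)).aestronglyMeasurable
          (fun x y => ‖x‖ * ‖y‖) 1 (by simp)
    _ = eLpNorm f p μ * eLpNorm g q μ := by
        rw [ENNReal.coe_one, one_mul, eLpNorm_comp_measurePreserving hg.aestronglyMeasurable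
          (measurePreserving_sub_right μ _)]

section DilatedConvolution

variable {E F G : Type*} [NormedAddCommGroup E] [NormedSpace ℝ E] [FiniteDimensional ℝ E]
  [MeasurableSpace E] [BorelSpace E] {μ : Measure E} [μ.IsAddHaarMeasure]
  [NormedAddCommGroup F] [NormedAddCommGroup G] {f : E → F} {g : E → G}

theorem lintegral_comp_sub_smul {g : E → ℝ≥0∞} (hg : Measurable g) {a : ℝ} (ha : a ≠ 0) (ζ : E) :
    ∫⁻ z, g (ζ - a • z) ∂μ = ENNReal.ofReal |(a ^ finrank ℝ E)⁻¹| * ∫⁻ w, g w ∂μ := by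
  rw [← lintegral_sub_left_eq_self g ζ, ← smul_eq_mul, ← lintegral_smul_measure,
    ← Measure.map_addHaar_smul μ ha,
    lintegral_map (f := fun w => g (ζ - w)) (hg.comp (measurable_const_sub ζ))
      (measurable_const_smul a)]

theorem lintegral_rpow_lintegral_enorm_mul_comp_sub_smul_le (hf : AEStronglyMeasurable f μ)
    (hg : StronglyMeasurable g) {a : ℝ} (ha : a ≠ 0) {p q r : ℝ} (hp : 1 ≤ p) (hq : 1 ≤ q)
    (hr : 0 < r) (hpqr : p⁻¹ + q⁻¹ = 1 + r⁻¹) :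
    (∫⁻ z, (∫⁻ ζ, ‖f ζ‖ₑ * ‖g (ζ - a • z)‖ₑ ∂μ) ^ r ∂μ) ^ r⁻¹ ≤
      ENNReal.ofReal |(a ^ finrank ℝ E)⁻¹| ^ r⁻¹ * (∫⁻ ζ, ‖f ζ‖ₑ ^ p ∂μ) ^ p⁻¹ *
        (∫⁻ w, ‖g w‖ₑ ^ q ∂μ) ^ q⁻¹ := by
  set A := ∫⁻ w, ‖g w‖ₑ ^ q ∂μ
  set c := ENNReal.ofReal |(a ^ finrank ℝ E)⁻¹|
  have hrq : r⁻¹ ≤ q⁻¹ := by linarith [inv_le_one_of_one_le₀ hp]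
  have hK : Measurable (Function.uncurry fun z ζ => ‖g (ζ - a • z)‖ₑ) :=
    (hg.comp_measurable (by fun_prop : Measurable fun x : E × E => x.2 - a • x.1)).enorm
  calc (∫⁻ z, (∫⁻ ζ, ‖f ζ‖ₑ * ‖g (ζ - a • z)‖ₑ ∂μ) ^ r ∂μ) ^ r⁻¹
      ≤ A ^ (q⁻¹ - r⁻¹) * (c * A) ^ r⁻¹ * (∫⁻ ζ, ‖f ζ‖ₑ ^ p ∂μ) ^ p⁻¹ :=
        lintegral_rpow_lintegral_mul_le hf.enorm hK hp hq hr hpqr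
          (fun z => (lintegral_sub_right_eq_self (fun w => ‖g w‖ₑ ^ q) (a • z)).le)
          (fun ζ => (lintegral_comp_sub_smul (hg.enorm.pow_const _) ha ζ).le)
    _ = c ^ r⁻¹ * (∫⁻ ζ, ‖f ζ‖ₑ ^ p ∂μ) ^ p⁻¹ * A ^ q⁻¹ := by
        rw [ENNReal.mul_rpow_of_nonneg _ _ (inv_nonneg.2 hr.le), mul_left_comm (A ^ _),
          ← ENNReal.rpow_add_of_nonneg _ _ (sub_nonneg.2 hrq) (inv_nonneg.2 hr.le), sub_add_cancel]
        ring

/-- For `r = ∞` the dilation factor is `1`, because `r.toReal⁻¹ = 0`. -/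
theorem eLpNorm_lintegral_enorm_mul_comp_sub_smul_le (hf : AEStronglyMeasurable f μ)
    (hg : StronglyMeasurable g) {a : ℝ} (ha : a ≠ 0) {p q r : ℝ≥0∞} (hp : 1 ≤ p) (hq : 1 ≤ q)
    (hpqr : p⁻¹ + q⁻¹ = 1 + r⁻¹) :
    eLpNorm (fun z => ∫⁻ ζ, ‖f ζ‖ₑ * ‖g (ζ - a • z)‖ₑ ∂μ) r μ ≤
      ENNReal.ofReal |(a ^ finrank ℝ E)⁻¹| ^ r.toReal⁻¹ * eLpNorm f p μ * eLpNorm g q μ := by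
  by_cases hr : r = ∞
  · subst hr
    have : p.HolderConjugate q := ENNReal.holderConjugate_iff.2 (by simpa using hpqr)
    rw [toReal_top, _root_.inv_zero, ENNReal.rpow_zero, one_mul]
    exact eLpNorm_top_lintegral_enorm_mul_comp_sub_le hf hg (a • ·)
  have hp0 : p ≠ 0 := (zero_lt_one.trans_le hp).ne'
  have hq0 : q ≠ 0 := (zero_lt_one.trans_le hq).ne'
  have hr0 : r ≠ 0 := by
    rintro rfl
    rw [ENNReal.inv_zero, add_top] at hpqr
    exact add_ne_top.2 ⟨ne_top_of_le_ne_top one_ne_top (ENNReal.inv_le_one.2 hp),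
      ne_top_of_le_ne_top one_ne_top (ENNReal.inv_le_one.2 hq)⟩ hpqr
  have hptop := ENNReal.ne_top_of_inv_add_inv_eq_one_add_inv hq hr hpqr
  have hqtop := ENNReal.ne_top_of_inv_add_inv_eq_one_add_inv hp hr ((add_comm _ _).trans hpqr)
  have hpqr' : p.toReal⁻¹ + q.toReal⁻¹ = 1 + r.toReal⁻¹ := by
    have := congrArg ENNReal.toReal hpqr
    rwa [toReal_add (inv_ne_top.2 hp0) (inv_ne_top.2 hq0),
      toReal_add one_ne_top (inv_ne_top.2 hr0), toReal_inv, toReal_inv, toReal_inv,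
      toReal_one] at this
  rw [eLpNorm_eq_lintegral_rpow_enorm_toReal hr0 hr,
    eLpNorm_eq_lintegral_rpow_enorm_toReal hp0 hptop,
    eLpNorm_eq_lintegral_rpow_enorm_toReal hq0 hqtop]
  simpa only [enorm_eq_self, one_div] using
    lintegral_rpow_lintegral_enorm_mul_comp_sub_smul_le hf hg ha
      (by simpa using ENNReal.toReal_mono hptop hp) (by simpa using ENNReal.toReal_mono hqtop hq)
      (ENNReal.toReal_pos hr0 hr) hpqr'

end DilatedConvolution

open Real in
theorem bargmannKernel_mul_exp (n : ℕ) (z ζ : EuclideanSpace ℝ (Fin n)) :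
    bargmannKernel n z ζ * exp (-‖z‖ ^ 2 / 2) =
      π ^ (-(n : ℝ) / 4) * exp (-‖ζ - √2 • z‖ ^ 2 / 2) := by
  rw [bargmannKernel, mul_assoc, ← exp_add, norm_sub_sq_real, norm_smul, inner_smul_right,
    real_inner_comm, norm_of_nonneg (sqrt_nonneg 2), mul_pow, sq_sqrt zero_le_two]
  ring_nf

open Real in
theorem enorm_bargmannTransform_mul_exp_le (n : ℕ) (f : EuclideanSpace ℝ (Fin n) → ℝ)
    (z : EuclideanSpace ℝ (Fin n)) :
    ‖π ^ (-(n : ℝ) / 2) * bargmannTransform n f z * exp (-‖z‖ ^ 2 / 2)‖ₑ ≤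
      ENNReal.ofReal (π ^ (-(n : ℝ) / 2)) *
        ∫⁻ ζ, ‖f ζ‖ₑ * ‖(4 / π) ^ ((n : ℝ) / 4) * exp (-‖ζ - √2 • z‖ ^ 2 / 2)‖ₑ := by
  have hF : bargmannTransform n f z * exp (-‖z‖ ^ 2 / 2) =
      ∫ ζ, f ζ * (π ^ (-(n : ℝ) / 4) * exp (-‖ζ - √2 • z‖ ^ 2 / 2)) := by
    simp_rw [bargmannTransform, ← integral_mul_const, mul_assoc, bargmannKernel_mul_exp]
  have hπ : π ^ (-(n : ℝ) / 4) ≤ (4 / π) ^ ((n : ℝ) / 4) := by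
    rw [neg_div, rpow_neg pi_pos.le, div_rpow zero_le_four pi_pos.le, inv_eq_one_div]
    gcongr
    exact one_le_rpow (by norm_num) (by positivity)
  rw [mul_assoc, hF, enorm_mul, Real.enorm_of_nonneg (by positivity)]
  gcongr
  refine (enorm_integral_le_lintegral_enorm _).trans (lintegral_mono fun ζ => ?_)
  rw [enorm_mul, enorm_mul, enorm_mul]
  gcongr
  rw [Real.enorm_of_nonneg (by positivity), Real.enorm_of_nonneg (by positivity)]
  exact ENNReal.ofReal_le_ofReal hπ

open Real in
theorem ofReal_pi_rpow_mul_ofReal_sqrt_two_pow_rpow (n : ℕ) {t : ℝ} (ht : 0 ≤ t) :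
    ENNReal.ofReal (π ^ (-(n : ℝ) / 2)) * ENNReal.ofReal |(√2 ^ n)⁻¹| ^ t⁻¹ =
      ENNReal.ofReal (1 / ((2 : ℝ) ^ ((n : ℝ) / (2 * t)) * π ^ ((n : ℝ) / 2))) := by
  have hsqrt : √2 ^ n = (2 : ℝ) ^ ((n : ℝ) / 2) := by
    rw [sqrt_eq_rpow, ← Real.rpow_natCast, ← rpow_mul zero_le_two, one_div_mul_eq_div]
  rw [abs_of_nonneg (by positivity), ENNReal.ofReal_rpow_of_nonneg (by positivity)
    (inv_nonneg.2 ht), ← ENNReal.ofReal_mul (by positivity), hsqrt, inv_rpow (by positivity),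
    ← rpow_mul zero_le_two, show (n : ℝ) / 2 * t⁻¹ = n / (2 * t) by ring, neg_div,
    rpow_neg pi_pos.le, one_div, mul_inv, mul_comm]

theorem statement_12_general
    (n : ℕ)
    (p q q' r : ℝ≥0∞) (hp : 1 ≤ p) (hq : 1 ≤ q)
    (hq' : q⁻¹ + q'⁻¹ = 1) (hpq' : p ≤ q')
    (hr : r⁻¹ = p⁻¹ - q'⁻¹)
    (f : EuclideanSpace ℝ (Fin n) → ℝ) (hf : MemLp f p volume) :
    eLpNorm (fun z : EuclideanSpace ℝ (Fin n) =>
        Real.pi ^ (-(n : ℝ) / 2) * bargmannTransform n f z * Real.exp (-‖z‖ ^ 2 / 2))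
      r volume ≤
    ENNReal.ofReal
        (1 / ((2 : ℝ) ^ ((n : ℝ) / (2 * r.toReal)) * Real.pi ^ ((n : ℝ) / 2))) *
      eLpNorm f p volume *
      eLpNorm (fun u : EuclideanSpace ℝ (Fin n) =>
        (4 / Real.pi) ^ ((n : ℝ) / 4) * Real.exp (-‖u‖ ^ 2 / 2)) q volume := by
  have hpqr : p⁻¹ + q⁻¹ = 1 + r⁻¹ := ENNReal.inv_add_inv_eq_one_add_inv hq' hpq' hr
  have hg : StronglyMeasurable fun u : EuclideanSpace ℝ (Fin n) =>
      (4 / Real.pi) ^ ((n : ℝ) / 4) * Real.exp (-‖u‖ ^ 2 / 2) :=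
    (by fun_prop : Continuous _).stronglyMeasurable
  calc _ ≤ (Real.pi ^ (-(n : ℝ) / 2)).toNNReal • eLpNorm (fun z => ∫⁻ ζ, ‖f ζ‖ₑ *
          ‖(4 / Real.pi) ^ ((n : ℝ) / 4) * Real.exp (-‖ζ - Real.sqrt 2 • z‖ ^ 2 / 2)‖ₑ) r volume :=
        eLpNorm_le_nnreal_smul_eLpNorm_of_ae_le_mul' (.of_forall fun z =>
          (enorm_bargmannTransform_mul_exp_le n f z).trans_eq (by rw [enorm_eq_self]; rfl)) r
    _ ≤ ENNReal.ofReal (Real.pi ^ (-(n : ℝ) / 2)) *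
          (ENNReal.ofReal |(Real.sqrt 2 ^ n)⁻¹| ^ r.toReal⁻¹ * eLpNorm f p volume *
            eLpNorm (fun u : EuclideanSpace ℝ (Fin n) =>
              (4 / Real.pi) ^ ((n : ℝ) / 4) * Real.exp (-‖u‖ ^ 2 / 2)) q volume) := by
        have hyoung := eLpNorm_lintegral_enorm_mul_comp_sub_smul_le (μ := volume) hf.1 hg
          (a := Real.sqrt 2) (by positivity) hp hq hpqr
        rw [finrank_euclideanSpace_fin] at hyoung
        exact mul_le_mul_right hyoung _
    _ = _ := by
        rw [← mul_assoc, ← mul_assoc, ofReal_pi_rpow_mul_ofReal_sqrt_two_pow_rpow n toReal_nonneg]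

/-- Young-type inequality for the Bargmann transform restricted to `ℝⁿ`:
`‖π^{-n/2} F(z) e^{-‖z‖²/2}‖_r ≤ 2^{-n/(2r)} π^{-n/2} ‖f‖_p ‖g‖_q` where
`1/r = 1/p - 1/q'` and `g` is the Gaussian `(4/π)^{n/4} e^{-‖u‖²/2}`. -/
theorem statement_12
    (n : ℕ) (hn : 0 < n)
    (p q q' r : ℝ≥0∞) (hp : 1 ≤ p) (hq : 1 ≤ q)
    (hq' : q⁻¹ + q'⁻¹ = 1) (hpq' : p ≤ q')
    (hr : r⁻¹ = p⁻¹ - q'⁻¹)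
    (f : EuclideanSpace ℝ (Fin n) → ℝ) (hf : MemLp f p volume) :
    eLpNorm (fun z : EuclideanSpace ℝ (Fin n) =>
        Real.pi ^ (-(n : ℝ) / 2) * bargmannTransform n f z * Real.exp (-‖z‖ ^ 2 / 2))
      r volume ≤
    ENNReal.ofReal
        (1 / ((2 : ℝ) ^ ((n : ℝ) / (2 * r.toReal)) * Real.pi ^ ((n : ℝ) / 2))) *
      eLpNorm f p volume *
      eLpNorm (fun u : EuclideanSpace ℝ (Fin n) =>
        (4 / Real.pi) ^ ((n : ℝ) / 4) * Real.exp (-‖u‖ ^ 2 / 2)) q volume :=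
  statement_12_general n p q q' r hp hq hq' hpq' hr f hf
end

section
/- For every integer n ≥ 1 and every y > 0: Σ_{k=0}^{n+1} binom(n+1, k)·Ψ_n^{(k)}(y) = 0, where Ψ_n^{(k)} denotes the k-th derivative of the Poisson wavelet Ψ_n on (0,∞). -/
/-!
On `(0, ∞)` the wavelet agrees near every point with `P(y) e^{-y}` for the polynomial
`P = (X - n) X^{n-1} / n!` of degree `n`. Differentiating `Q(y) e^{-y}` gives `(Q' - Q)(y) e^{-y}`,
so `Ψ_n^{(k)} = ((D - 1)^k P) e^{-y}` with `D` the derivative of polynomials, and the binomial sum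
becomes `((D - 1) + 1)^{n+1} P = D^{n+1} P = 0`.
-/

/-- The Poisson wavelet `Ψ_n(y) = ((y-n)/n!)·y^{n-1}·e^{-y}` for `y ≥ 0`, `0` for `y < 0`. -/
noncomputable def poissonWavelet (n : ℕ) (y : ℝ) : ℝ :=
  if 0 ≤ y then (y - n) / (Nat.factorial n) * y ^ (n - 1) * Real.exp (-y) else 0

open Polynomial Real Topology Finset

noncomputable def poissonWaveletPoly (n : ℕ) : ℝ[X] :=
  C ((n.factorial : ℝ)⁻¹) * (X - C (n : ℝ)) * X ^ (n - 1)

lemma natDegree_poissonWaveletPoly_le {n : ℕ} (hn : 1 ≤ n) :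
    (poissonWaveletPoly n).natDegree ≤ n := by
  have h : (poissonWaveletPoly n).natDegree ≤ 0 + 1 + (n - 1) :=
    natDegree_mul_le_of_le (natDegree_mul_le_of_le (natDegree_C _).le (natDegree_X_sub_C_le _))
      (natDegree_X_pow_le _)
  omega

lemma poissonWavelet_eventuallyEq {n : ℕ} {y : ℝ} (hy : 0 < y) :
    poissonWavelet n =ᶠ[𝓝 y] fun z => (poissonWaveletPoly n).eval z * exp (-z) := by
  filter_upwards [Ioi_mem_nhds hy] with z hz
  simp only [poissonWavelet, if_pos (Set.mem_Ioi.mp hz).le, poissonWaveletPoly, eval_mul,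
    eval_sub, eval_C, eval_X, eval_pow]
  ring

lemma Polynomial.deriv_eval_mul_exp_neg (P : ℝ[X]) :
    deriv (fun y => P.eval y * exp (-y)) = fun y => (derivative P - P).eval y * exp (-y) := by
  funext y
  have hexp : HasDerivAt (fun y => exp (-y)) (-exp (-y)) y := by
    simpa using (hasDerivAt_neg y).exp
  rw [((P.hasDerivAt y).fun_mul hexp).deriv, eval_sub]
  ring

lemma Polynomial.iterate_deriv_eval_mul_exp_neg (P : ℝ[X]) (k : ℕ) :
    deriv^[k] (fun y => P.eval y * exp (-y))
      = fun y => (((derivative - 1 : Module.End ℝ ℝ[X]) ^ k) P).eval y * exp (-y) := by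
  induction k with
  | zero => simp
  | succ k ih =>
    rw [Function.iterate_succ_apply', ih, deriv_eval_mul_exp_neg, pow_succ', Module.End.mul_apply]
    rfl

lemma sum_choose_mul_sub_one_pow {A : Type*} [Ring A] (T : A) (m : ℕ) :
    ∑ k ∈ range (m + 1), (m.choose k : A) * (T - 1) ^ k = T ^ m := by
  calc ∑ k ∈ range (m + 1), (m.choose k : A) * (T - 1) ^ k
      = ∑ k ∈ range (m + 1), (T - 1) ^ k * 1 ^ (m - k) * (m.choose k : A) := by
        refine sum_congr rfl fun k _ => ?_
        rw [one_pow, mul_one, (Nat.cast_commute _ _).eq]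
    _ = (T - 1 + 1) ^ m := ((Commute.one_right (T - 1)).add_pow m).symm
    _ = T ^ m := by rw [sub_add_cancel]

lemma Polynomial.sum_choose_mul_iterate_deriv_eval_mul_exp_neg {P : ℝ[X]} {m : ℕ}
    (hP : P.natDegree < m) (y : ℝ) :
    ∑ k ∈ range (m + 1), (m.choose k : ℝ) * deriv^[k] (fun y => P.eval y * exp (-y)) y
      = 0 := by
  have hD : ((derivative : Module.End ℝ ℝ[X]) ^ m) P = 0 := by
    rw [Module.End.pow_apply]
    exact iterate_derivative_eq_zero hP
  have hsum := congrArg (fun T : Module.End ℝ ℝ[X] => (T P).eval y * exp (-y))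
    (sum_choose_mul_sub_one_pow (derivative : Module.End ℝ ℝ[X]) m)
  simp only [LinearMap.sum_apply, eval_finsetSum, sum_mul, hD, eval_zero, zero_mul] at hsum
  rw [← hsum]
  refine sum_congr rfl fun k _ => ?_
  rw [iterate_deriv_eval_mul_exp_neg, Module.End.mul_apply, Module.End.natCast_apply, eval_smul,
    nsmul_eq_mul, mul_assoc]

/-- `∑_{k=0}^{n+1} C(n+1,k)·Ψ_n^{(k)}(y) = 0` for `n ≥ 1`, `y > 0`. -/
theorem statement_16 (n : ℕ) (hn : 1 ≤ n) (y : ℝ) (hy : 0 < y) :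
    ∑ k ∈ Finset.range (n + 2),
      ((n + 1).choose k : ℝ) * deriv^[k] (poissonWavelet n) y = 0 := by
  have hlocal (k : ℕ) : deriv^[k] (poissonWavelet n) y
      = deriv^[k] (fun z => (poissonWaveletPoly n).eval z * exp (-z)) y := by
    simpa only [iteratedDeriv_eq_iterate] using (poissonWavelet_eventuallyEq hy).iteratedDeriv_eq k
  simp only [hlocal]
  exact sum_choose_mul_iterate_deriv_eval_mul_exp_neg
    (Nat.lt_succ_of_le (natDegree_poissonWaveletPoly_le hn)) y
end
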